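/- For all n, m, and k ≤ n, the approximation ratio of the k-sortition rule is at most 1 + 6·exp(−1/2)/√k. -/

import Mathlib

open Finset BigOperators

noncomputable section

/-- Hamming distance between two preference vectors over `m` binary issues. -/
def hamming {m : ℕ} (x y : Fin m → Bool) : ℕ :=
  (Finset.univ.filter fun j => x j ≠ y j).card

/-- Social cost of outcome `z` on profile `X`: sum of Hamming distances. -/
def SC {n m : ℕ} (X : Fin n → Fin m → Bool) (z : Fin m → Bool) : ℕ :=
  ∑ i, hamming (X i) z

/-- Optimal (minimal) social cost over all outcomes. -/
def optCost {n m : ℕ} (X : Fin n → Fin m → Bool) : ℕ :=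
  Finset.univ.inf' Finset.univ_nonempty fun z : Fin m → Bool => SC X z

/-- Number of voters preferring alternative 1 (`true`) on issue `j`. -/
def trueCount {n m : ℕ} (X : Fin n → Fin m → Bool) (j : Fin m) : ℕ :=
  (Finset.univ.filter fun i => X i j = true).card

/-- Number of voters preferring alternative 0 (`false`) on issue `j`. -/
def falseCount {n m : ℕ} (X : Fin n → Fin m → Bool) (j : Fin m) : ℕ :=
  (Finset.univ.filter fun i => X i j = false).card

/-- Expected social cost of `k`-sortition: a uniformly random committee of size `k`
decides each issue by simple majority, ties broken uniformly at random. -/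
def sortitionCost (k : ℕ) {n m : ℕ} (X : Fin n → Fin m → Bool) : ℝ :=
  (∑ C ∈ Finset.powersetCard k (Finset.univ : Finset (Fin n)), ∑ j : Fin m,
      (if k < 2 * (C.filter fun i => X i j = true).card then (falseCount X j : ℝ)
       else if 2 * (C.filter fun i => X i j = true).card < k then (trueCount X j : ℝ)
       else (n : ℝ) / 2)) / (n.choose k : ℝ)

/-- Ratio of an (expected) cost to the optimal cost, with the convention `0/0 = 1`. -/
def ratio (cost : ℝ) (opt : ℕ) : ℝ := if opt = 0 then 1 else cost / (opt : ℝ)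

/-- Worst-case approximation ratio of `k`-sortition over profiles with `n` voters, `m` issues. -/
def sortitionAR (n m k : ℕ) : ℝ :=
  ⨆ X : Fin n → Fin m → Bool, ratio (sortitionCost k X) (optCost X)

/-- The set of committee members of `C` closest (in Hamming distance) to voter `i`. -/
def closestSet {n m : ℕ} (X : Fin n → Fin m → Bool) (C : Finset (Fin n)) (i : Fin n) :
    Finset (Fin n) :=
  C.filter fun c => ∀ c' ∈ C, hamming (X i) (X c) ≤ hamming (X i) (X c')

/-- Weight of committee member `c`: each voter splits one unit of weight equally among
their closest committee members. -/
def wWeight {n m : ℕ} (X : Fin n → Fin m → Bool) (C : Finset (Fin n)) (c : Fin n) : ℝ :=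
  ∑ i : Fin n, if c ∈ closestSet X C i then 1 / ((closestSet X C i).card : ℝ) else 0

/-- Expected social cost of the decision of committee `C` under weighted majority
(per issue, ties broken uniformly). -/
def wCost {n m : ℕ} (X : Fin n → Fin m → Bool) (C : Finset (Fin n)) : ℝ :=
  ∑ j : Fin m,
    (if (∑ c ∈ C.filter (fun c => X c j = false), wWeight X C c)
          < (∑ c ∈ C.filter (fun c => X c j = true), wWeight X C c)
        then (falseCount X j : ℝ)
     else if (∑ c ∈ C.filter (fun c => X c j = true), wWeight X C c)
          < (∑ c ∈ C.filter (fun c => X c j = false), wWeight X C c)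
        then (trueCount X j : ℝ)
     else (n : ℝ) / 2)

/-- Expected social cost of weighted `k`-sortition: uniformly random committee of size `k`,
weighted majority vote per issue. -/
def wSortitionCost (k : ℕ) {n m : ℕ} (X : Fin n → Fin m → Bool) : ℝ :=
  (∑ C ∈ Finset.powersetCard k (Finset.univ : Finset (Fin n)), wCost X C) / (n.choose k : ℝ)

/-- Worst-case approximation ratio of weighted `k`-sortition. -/
def wSortitionAR (n m k : ℕ) : ℝ :=
  ⨆ X : Fin n → Fin m → Bool, ratio (wSortitionCost k X) (optCost X)

/-!
On each issue let `A` be the minority side, `a = #A ≤ n / 2`. A committee costs `a` when it sides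
with the majority and at most `n - a` otherwise, so the excess over the optimum `a` is at most
`n - 2a` times the fraction of committees in which `A` holds at least half of the `k` seats.
With `ε = 6 e^{-1/2} / √k` we have `k ε² = 36 / e ≥ 12`. If `ε ≥ 2`, Markov's inequality for the
hypergeometric count `#(C ∩ A)` (mean `k a / n`) bounds the excess by `2a ≤ ε a`; if `ε < 2`, then
`k ≥ 4` and Chebyshev's inequality with the hypergeometric variance `k a (n - a)(n - k) / (n²(n - 1))`
bounds it by `ε a` as soon as `n - 2a > ε a`, because `4 + 4ε ≤ k ε²`.
-/

section Hypergeometric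

open scoped Nat

variable {α : Type*} [DecidableEq α] {s A : Finset α}

theorem sum_choose_card_inter_powersetCard (hA : A ⊆ s) {j k : ℕ} (hjk : j ≤ k) :
    ∑ C ∈ s.powersetCard k, (#(C ∩ A)).choose j = (#A).choose j * (#s - j).choose (k - j) := by
  have hcount : ∀ C : Finset α,
      (#(C ∩ A)).choose j = ∑ S ∈ A.powersetCard j, if S ⊆ C then 1 else 0 := by
    intro C
    rw [← card_powersetCard, sum_boole, Nat.cast_id]
    congr 1
    ext S
    simp only [mem_powersetCard, mem_filter, subset_inter_iff]
    tauto
  simp_rw [hcount]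
  rw [sum_comm]
  calc ∑ S ∈ A.powersetCard j, ∑ C ∈ s.powersetCard k, (if S ⊆ C then 1 else 0)
      = ∑ S ∈ A.powersetCard j, (#s - j).choose (k - j) := by
        refine sum_congr rfl fun S hS => ?_
        obtain ⟨hSA, hSj⟩ := mem_powersetCard.mp hS
        rw [sum_boole, Nat.cast_id,
          card_filter_powersetCard_subset S s k (hSA.trans hA) (hSj ▸ hjk), hSj]
    _ = _ := by rw [sum_const, card_powersetCard, smul_eq_mul]

/-- Factorial moments of the hypergeometric distribution. -/
theorem descFactorial_mul_sum_descFactorial_card_inter (hA : A ⊆ s) {j k : ℕ} (hjk : j ≤ k) :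
    (#s).descFactorial j * ∑ C ∈ s.powersetCard k, (#(C ∩ A)).descFactorial j
      = k.descFactorial j * (#A).descFactorial j * (#s).choose k := by
  simp only [Nat.descFactorial_eq_factorial_mul_choose, ← mul_sum,
    sum_choose_card_inter_powersetCard hA hjk]
  calc j ! * (#s).choose j * (j ! * ((#A).choose j * (#s - j).choose (k - j)))
      = j ! * j ! * (#A).choose j * ((#s).choose j * (#s - j).choose (k - j)) := by ring
    _ = _ := by rw [← Nat.choose_mul hjk]; ring

theorem card_mul_sum_card_inter (hA : A ⊆ s) {k : ℕ} (hk : 1 ≤ k) :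
    #s * ∑ C ∈ s.powersetCard k, #(C ∩ A) = k * #A * (#s).choose k := by
  simpa using descFactorial_mul_sum_descFactorial_card_inter hA hk

theorem sum_sq_deviation_card_inter (hA : A ⊆ s) {k : ℕ} (hk : 2 ≤ k) :
    ((#s : ℝ) - 1) * ∑ C ∈ s.powersetCard k, ((#s : ℝ) * #(C ∩ A) - k * #A) ^ 2
      = k * #A * (#s - k) * (#s - #A) * (#s).choose k := by
  have h₁ : (#s : ℝ) * ∑ C ∈ s.powersetCard k, (#(C ∩ A) : ℝ) = k * #A * (#s).choose k := by
    exact_mod_cast card_mul_sum_card_inter hA (by omega : 1 ≤ k)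
  have h₂ : (#s : ℝ) * (#s - 1) * ∑ C ∈ s.powersetCard k, (#(C ∩ A) : ℝ) * (#(C ∩ A) - 1)
      = k * (k - 1) * (#A * (#A - 1)) * (#s).choose k := by
    have := congrArg (Nat.cast (R := ℝ)) (descFactorial_mul_sum_descFactorial_card_inter hA hk)
    push_cast [Nat.cast_descFactorial_two] at this
    exact this
  have hN : (#(s.powersetCard k) : ℝ) = (#s).choose k := by rw [card_powersetCard]
  have hexpand : ∑ C ∈ s.powersetCard k, ((#s : ℝ) * #(C ∩ A) - k * #A) ^ 2
      = #s ^ 2 * ∑ C ∈ s.powersetCard k, (#(C ∩ A) : ℝ) * (#(C ∩ A) - 1)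
        + (#s ^ 2 - 2 * #s * k * #A) * ∑ C ∈ s.powersetCard k, (#(C ∩ A) : ℝ)
        + k ^ 2 * #A ^ 2 * (#s).choose k := by
    calc _ = ∑ C ∈ s.powersetCard k, ((#s : ℝ) ^ 2 * (#(C ∩ A) * (#(C ∩ A) - 1))
            + (#s ^ 2 - 2 * #s * k * #A) * #(C ∩ A) + k ^ 2 * #A ^ 2) :=
          sum_congr rfl fun C _ => by ring
      _ = _ := by
          rw [sum_add_distrib, sum_add_distrib, ← mul_sum, ← mul_sum, sum_const, nsmul_eq_mul, hN]
          ring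
  rw [hexpand]
  linear_combination (#s : ℝ) * h₂ + ((#s : ℝ) - 1) * (#s - 2 * k * #A) * h₁

theorem sum_sq_deviation_card_inter_le (hA : A ⊆ s) {k : ℕ} (hk : 2 ≤ k) (hks : k ≤ #s) :
    ∑ C ∈ s.powersetCard k, ((#s : ℝ) * #(C ∩ A) - k * #A) ^ 2
      ≤ k * #A * (#s - #A) * (#s).choose k := by
  have hs : (1 : ℝ) < #s := by exact_mod_cast (by omega : 1 < #s)
  have hAs : (#A : ℝ) ≤ #s := by exact_mod_cast card_le_card hA
  have hk' : (1 : ℝ) ≤ k := by exact_mod_cast (by omega : 1 ≤ k)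
  have hnonneg : (0 : ℝ) ≤ k * #A * (#s - #A) * (#s).choose k := by
    have := sub_nonneg.mpr hAs
    positivity
  refine le_of_mul_le_mul_left ?_ (sub_pos.mpr hs)
  calc ((#s : ℝ) - 1) * ∑ C ∈ s.powersetCard k, ((#s : ℝ) * #(C ∩ A) - k * #A) ^ 2
      = (#s - k) * (k * #A * (#s - #A) * (#s).choose k) := by
        rw [sum_sq_deviation_card_inter hA hk]; ring
    _ ≤ (#s - 1) * (k * #A * (#s - #A) * (#s).choose k) :=
        mul_le_mul_of_nonneg_right (by linarith) hnonneg

end Hypergeometric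

section Tail

variable {α : Type*} [DecidableEq α]

def halfSeatCommittees (s A : Finset α) (k : ℕ) : Finset (Finset α) :=
  (s.powersetCard k).filter fun C => k ≤ 2 * #(C ∩ A)

variable {s A : Finset α} {k : ℕ}

theorem card_halfSeatCommittees_le : #(halfSeatCommittees s A k) ≤ (#s).choose k :=
  (card_filter_le _ _).trans (card_powersetCard k s).le

theorem card_mul_card_halfSeatCommittees_le (hA : A ⊆ s) (hk : 1 ≤ k) :
    #s * #(halfSeatCommittees s A k) ≤ 2 * #A * (#s).choose k := by
  have hmarkov : k * #(halfSeatCommittees s A k) ≤ 2 * ∑ C ∈ s.powersetCard k, #(C ∩ A) := by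
    calc k * #(halfSeatCommittees s A k) = ∑ C ∈ halfSeatCommittees s A k, k := by
          rw [sum_const, smul_eq_mul, mul_comm]
      _ ≤ ∑ C ∈ halfSeatCommittees s A k, 2 * #(C ∩ A) :=
          sum_le_sum fun C hC => (mem_filter.mp hC).2
      _ ≤ ∑ C ∈ s.powersetCard k, 2 * #(C ∩ A) := sum_le_sum_of_subset (filter_subset _ _)
      _ = 2 * ∑ C ∈ s.powersetCard k, #(C ∩ A) := (mul_sum _ _ _).symm
  refine Nat.le_of_mul_le_mul_left ?_ (by omega : 0 < k)
  calc k * (#s * #(halfSeatCommittees s A k)) = #s * (k * #(halfSeatCommittees s A k)) := by ring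
    _ ≤ #s * (2 * ∑ C ∈ s.powersetCard k, #(C ∩ A)) := Nat.mul_le_mul_left _ hmarkov
    _ = 2 * (#s * ∑ C ∈ s.powersetCard k, #(C ∩ A)) := by ring
    _ = k * (2 * #A * (#s).choose k) := by rw [card_mul_sum_card_inter hA hk]; ring

theorem card_halfSeatCommittees_mul_sq_le (hA : A ⊆ s) (hk : 2 ≤ k) (hks : k ≤ #s)
    (hAs : 2 * #A ≤ #s) :
    (#(halfSeatCommittees s A k) : ℝ) * (k * (#s - 2 * #A)) ^ 2
      ≤ 4 * (k * #A * (#s - #A) * (#s).choose k) := by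
  have hd : (0 : ℝ) ≤ k * (#s - 2 * #A) := by
    have : (2 * #A : ℝ) ≤ #s := by exact_mod_cast hAs
    have : (0 : ℝ) ≤ #s - 2 * #A := by linarith
    positivity
  calc (#(halfSeatCommittees s A k) : ℝ) * (k * (#s - 2 * #A)) ^ 2
      = ∑ C ∈ halfSeatCommittees s A k, ((k : ℝ) * (#s - 2 * #A)) ^ 2 := by
        rw [sum_const, nsmul_eq_mul]
    _ ≤ ∑ C ∈ halfSeatCommittees s A k, (2 * ((#s : ℝ) * #(C ∩ A) - k * #A)) ^ 2 := by
        refine sum_le_sum fun C hC => pow_le_pow_left₀ hd ?_ 2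
        have hC : (k : ℝ) ≤ 2 * #(C ∩ A) := by exact_mod_cast (mem_filter.mp hC).2
        nlinarith [Nat.cast_nonneg (α := ℝ) (#s)]
    _ ≤ ∑ C ∈ s.powersetCard k, (2 * ((#s : ℝ) * #(C ∩ A) - k * #A)) ^ 2 :=
        sum_le_sum_of_subset_of_nonneg (filter_subset _ _) fun _ _ _ => sq_nonneg _
    _ = 4 * ∑ C ∈ s.powersetCard k, ((#s : ℝ) * #(C ∩ A) - k * #A) ^ 2 := by
        rw [mul_sum]; exact sum_congr rfl fun C _ => by ring
    _ ≤ _ := by gcongr; exact sum_sq_deviation_card_inter_le hA hk hks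

theorem sub_mul_card_halfSeatCommittees_le (hA : A ⊆ s) (hks : k ≤ #s) (hAs : 2 * #A ≤ #s)
    {ε : ℝ} (hε : 0 < ε) (hkε : 12 ≤ k * ε ^ 2) :
    ((#s : ℝ) - 2 * #A) * #(halfSeatCommittees s A k) ≤ ε * #A * (#s).choose k := by
  have hF : (#(halfSeatCommittees s A k) : ℝ) ≤ (#s).choose k := by
    exact_mod_cast card_halfSeatCommittees_le
  have ha : (0 : ℝ) ≤ #A := Nat.cast_nonneg _
  rcases le_or_gt ((#s : ℝ) - 2 * #A) (ε * #A) with hsmall | hlarge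
  · calc ((#s : ℝ) - 2 * #A) * #(halfSeatCommittees s A k)
        ≤ ε * #A * #(halfSeatCommittees s A k) := by gcongr
      _ ≤ ε * #A * (#s).choose k := by gcongr
  have hd : (0 : ℝ) < #s - 2 * #A := lt_of_le_of_lt (by positivity) hlarge
  rcases le_or_gt 2 ε with hε2 | hε2
  · have hk : 1 ≤ k := by
      by_contra hk
      simp only [show k = 0 by omega, CharP.cast_eq_zero, zero_mul] at hkε
      linarith
    have hmarkov : (#s : ℝ) * #(halfSeatCommittees s A k) ≤ 2 * #A * (#s).choose k := by
      exact_mod_cast card_mul_card_halfSeatCommittees_le hA hk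
    calc ((#s : ℝ) - 2 * #A) * #(halfSeatCommittees s A k)
        ≤ #s * #(halfSeatCommittees s A k) := by gcongr; linarith
      _ ≤ 2 * #A * (#s).choose k := hmarkov
      _ ≤ ε * #A * (#s).choose k := by gcongr
  have hk : 4 ≤ k := by
    by_contra hk
    have : (k : ℝ) ≤ 3 := by exact_mod_cast (by omega : k ≤ 3)
    nlinarith
  set d : ℝ := #s - 2 * #A with hd_def
  have hkd : (0 : ℝ) < k ^ 2 * d := by positivity
  -- from `ε * #A < d` and `4 + 4 * ε < 12 ≤ k * ε ^ 2`
  have hmargin : 4 * (d + #A) ≤ ε * k * d := by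
    refine le_of_mul_le_mul_left ?_ hε
    nlinarith
  refine le_of_mul_le_mul_right ?_ hkd
  calc d * #(halfSeatCommittees s A k) * (k ^ 2 * d)
      = (#(halfSeatCommittees s A k) : ℝ) * (k * d) ^ 2 := by ring
    _ ≤ 4 * ((k : ℝ) * #A * (#s - #A) * (#s).choose k) :=
        card_halfSeatCommittees_mul_sq_le hA (by omega) hks hAs
    _ = (k : ℝ) * #A * (#s).choose k * (4 * (d + #A)) := by rw [hd_def]; ring
    _ ≤ k * #A * (#s).choose k * (ε * k * d) := by gcongr
    _ = ε * #A * (#s).choose k * (k ^ 2 * d) := by ring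

theorem sum_le_one_add_mul_of_le_add_indicator (hA : A ⊆ s) (hks : k ≤ #s) (hAs : 2 * #A ≤ #s)
    {ε : ℝ} (hε : 0 < ε) (hkε : 12 ≤ k * ε ^ 2) (c : Finset α → ℝ)
    (hc : ∀ C ∈ s.powersetCard k,
      c C ≤ #A + ((#s : ℝ) - 2 * #A) * if k ≤ 2 * #(C ∩ A) then 1 else 0) :
    ∑ C ∈ s.powersetCard k, c C ≤ (1 + ε) * #A * (#s).choose k :=
  calc ∑ C ∈ s.powersetCard k, c C
      ≤ ∑ C ∈ s.powersetCard k, ((#A : ℝ) + (#s - 2 * #A) * if k ≤ 2 * #(C ∩ A) then 1 else 0) :=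
        sum_le_sum hc
    _ = #A * (#s).choose k + (#s - 2 * #A) * #(halfSeatCommittees s A k) := by
        rw [sum_add_distrib, sum_const, card_powersetCard, nsmul_eq_mul, ← mul_sum, sum_boole]
        rw [halfSeatCommittees]; ring
    _ ≤ #A * (#s).choose k + ε * #A * (#s).choose k := by
        linarith [sub_mul_card_halfSeatCommittees_le hA hks hAs hε hkε]
    _ = (1 + ε) * #A * (#s).choose k := by ring

end Tail

theorem card_filter_eq_true_add_card_filter_eq_false {α : Type*} (s : Finset α) (f : α → Bool) :
    #(s.filter (f · = true)) + #(s.filter (f · = false)) = #s := by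
  simpa only [Bool.not_eq_true] using card_filter_add_card_filter_not (s := s) (f · = true)

section Voting

variable {n m : ℕ}

theorem trueCount_add_falseCount (X : Fin n → Fin m → Bool) (j : Fin m) :
    trueCount X j + falseCount X j = n :=
  (card_filter_eq_true_add_card_filter_eq_false univ (X · j)).trans (card_fin n)

theorem SC_eq_sum (X : Fin n → Fin m → Bool) (z : Fin m → Bool) :
    SC X z = ∑ j, if z j = true then falseCount X j else trueCount X j := by
  simp only [SC, hamming, card_filter]
  rw [sum_comm]
  refine sum_congr rfl fun j _ => ?_
  cases z j <;> simp only [trueCount, falseCount, card_filter, ne_eq, Bool.not_eq_false,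
    Bool.not_eq_true, Bool.false_eq_true, if_false, if_true]

theorem optCost_eq_sum_min (X : Fin n → Fin m → Bool) :
    optCost X = ∑ j, min (trueCount X j) (falseCount X j) := by
  refine le_antisymm ?_ (le_inf' _ _ fun z _ => ?_)
  · refine (inf'_le _ (mem_univ fun j => decide (falseCount X j ≤ trueCount X j))).trans_eq ?_
    rw [SC_eq_sum]
    refine sum_congr rfl fun j _ => ?_
    by_cases h : falseCount X j ≤ trueCount X j
    · simp [h]
    · simp [h]; omega
  · rw [SC_eq_sum]
    refine sum_le_sum fun j _ => ?_
    split_ifs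
    exacts [min_le_right _ _, min_le_left _ _]

def issueCost (k : ℕ) (X : Fin n → Fin m → Bool) (C : Finset (Fin n)) (j : Fin m) : ℝ :=
  if k < 2 * #(C.filter fun i => X i j = true) then (falseCount X j : ℝ)
  else if 2 * #(C.filter fun i => X i j = true) < k then (trueCount X j : ℝ)
  else (n : ℝ) / 2

theorem sortitionCost_eq_sum_issueCost (k : ℕ) (X : Fin n → Fin m → Bool) :
    sortitionCost k X
      = (∑ C ∈ (univ : Finset (Fin n)).powersetCard k, ∑ j, issueCost k X C j) / n.choose k :=
  rfl

theorem sum_issueCost_le {k : ℕ} (hkn : k ≤ n) {ε : ℝ} (hε : 0 < ε) (hkε : 12 ≤ k * ε ^ 2)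
    (X : Fin n → Fin m → Bool) (j : Fin m) :
    ∑ C ∈ (univ : Finset (Fin n)).powersetCard k, issueCost k X C j
      ≤ (1 + ε) * min (trueCount X j) (falseCount X j) * n.choose k := by
  have hbound : ∀ A : Finset (Fin n), 2 * #A ≤ n →
      (∀ C ∈ (univ : Finset (Fin n)).powersetCard k,
        issueCost k X C j ≤ #A + ((n : ℝ) - 2 * #A) * if k ≤ 2 * #(C ∩ A) then 1 else 0) →
      ∑ C ∈ (univ : Finset (Fin n)).powersetCard k, issueCost k X C j
        ≤ (1 + ε) * #A * n.choose k := by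
    intro A hA hc
    simpa only [card_fin] using sum_le_one_add_mul_of_le_add_indicator (subset_univ A)
      (by rwa [card_fin]) (by rwa [card_fin]) hε hkε _ (by simpa only [card_fin] using hc)
  have htf := trueCount_add_falseCount X j
  have hntf : (n : ℝ) = trueCount X j + falseCount X j := by exact_mod_cast htf.symm
  rcases le_total (trueCount X j) (falseCount X j) with h | h
  · have h' : (trueCount X j : ℝ) ≤ falseCount X j := by exact_mod_cast h
    rw [min_eq_left h]
    refine hbound _ (by rw [← trueCount]; omega) fun C _ => ?_
    rw [inter_filter, inter_univ, ← trueCount]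
    unfold issueCost
    split_ifs <;> first | omega | linarith
  · have h' : (falseCount X j : ℝ) ≤ trueCount X j := by exact_mod_cast h
    rw [min_eq_right h]
    refine hbound _ (by rw [← falseCount]; omega) fun C hC => ?_
    have hsplit := card_filter_eq_true_add_card_filter_eq_false C (X · j)
    rw [(mem_powersetCard.mp hC).2] at hsplit
    rw [inter_filter, inter_univ, ← falseCount]
    unfold issueCost
    split_ifs <;> first | omega | linarith

theorem sortitionCost_le {k : ℕ} (hkn : k ≤ n) {ε : ℝ} (hε : 0 < ε) (hkε : 12 ≤ k * ε ^ 2)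
    (X : Fin n → Fin m → Bool) : sortitionCost k X ≤ (1 + ε) * optCost X := by
  rw [sortitionCost_eq_sum_issueCost, div_le_iff₀ (by exact_mod_cast Nat.choose_pos hkn),
    sum_comm, optCost_eq_sum_min, Nat.cast_sum, mul_sum, sum_mul]
  exact sum_le_sum fun j _ => by exact_mod_cast sum_issueCost_le hkn hε hkε X j

end Voting

theorem stmt4_general (n m k : ℕ) (hk : 1 ≤ k) (hkn : k ≤ n) :
    sortitionAR n m k ≤ 1 + 6 * Real.exp (-(1 / 2)) / Real.sqrt k := by
  have hk' : (0 : ℝ) < k := by exact_mod_cast hk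
  have hε : 0 < 6 * Real.exp (-(1 / 2)) / Real.sqrt k := by positivity
  have hkε : 12 ≤ k * (6 * Real.exp (-(1 / 2)) / Real.sqrt k) ^ 2 := by
    have hexp : Real.exp (-(1 / 2)) ^ 2 = (Real.exp 1)⁻¹ := by
      rw [← Real.exp_nat_mul, ← Real.exp_neg]; norm_num
    rw [div_pow, Real.sq_sqrt hk'.le, mul_div_cancel₀ _ hk'.ne', mul_pow, hexp,
      ← div_eq_mul_inv, le_div_iff₀ (Real.exp_pos 1)]
    linarith [Real.exp_one_lt_three]
  refine ciSup_le fun X => ?_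
  rw [ratio]
  split_ifs with h
  · linarith
  · rw [div_le_iff₀ (by exact_mod_cast Nat.pos_of_ne_zero h)]
    exact sortitionCost_le hkn hε hkε X

theorem stmt4 (n m k : ℕ) (hk : 1 ≤ k) (hkn : k ≤ n) (hm : 1 ≤ m) :
    sortitionAR n m k ≤ 1 + 6 * Real.exp (-(1 / 2)) / Real.sqrt k :=
  stmt4_general n m k hk hkn

end
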